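/- arXiv:1009.4724 — 4 statements merged into one kernel-verified Lean document; each statement's English description precedes it below -/
import Mathlib

section
/- Let M ⊆ ℚ^n be an almost unimodular set of rank d and volume m. Suppose {v0; v1,…,vr} is an ENSS in M whose ℚ≥0-combination for v0 involves only linearly independent vectors v1,…,vd from M, and that v1,…,vd span a d-dimensional space. Then |det(v1,…,vd)| ≠ m. -/
/-- `v` is a linear combination of the vectors in `M` with integer coefficients. -/
def memZSpan {n : ℕ} (M : Finset (Fin n → ℚ)) (v : Fin n → ℚ) : Prop :=
  ∃ c : (Fin n → ℚ) → ℤ, v = ∑ w ∈ M, (c w : ℚ) • w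

/-- `v` is a linear combination of the vectors in `M` with nonnegative rational coefficients. -/
def memQnnSpan {n : ℕ} (M : Finset (Fin n → ℚ)) (v : Fin n → ℚ) : Prop :=
  ∃ q : (Fin n → ℚ) → ℚ, (∀ w, 0 ≤ q w) ∧ v = ∑ w ∈ M, q w • w

/-- `v` is a linear combination of the vectors in `M` with nonnegative integer coefficients. -/
def memNSpan {n : ℕ} (M : Finset (Fin n → ℚ)) (v : Fin n → ℚ) : Prop :=
  ∃ a : (Fin n → ℚ) → ℕ, v = ∑ w ∈ M, (a w : ℚ) • w

/-- A finite set `M ⊆ ℚ^n` is saturated if `ℤ≥0(M) = ℤ(M) ∩ ℚ≥0(M)`. -/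
def Saturated {n : ℕ} (M : Finset (Fin n → ℚ)) : Prop :=
  ∀ v : Fin n → ℚ, memZSpan M v → memQnnSpan M v → memNSpan M v


/-- The determinant of a `d`-tuple of vectors from `M`, computed with respect to a fixed
basis `b` of the linear span of `M`. -/
noncomputable def detT {n d : ℕ} (M : Finset (Fin n → ℚ))
    (b : Module.Basis (Fin d) ℚ (Submodule.span ℚ (M : Set (Fin n → ℚ))))
    (w : Fin d → M) : ℚ :=
  Matrix.det (Matrix.of fun i j =>
    b.repr ⟨(w i : Fin n → ℚ), Submodule.subset_span (Finset.mem_coe.mpr (w i).2)⟩ j)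

/-!
If `|det(v₁,…,v_d)| = m`, then for every `w ∈ M` the Cramer coefficients
`det(v₁,…,w,…,v_d) / det(v₁,…,v_d)` of `w` lie in `ℤ m / (±m) = ℤ`, so `M`, hence `ℤ(E)`,
lies in the lattice `ℤ(v₁,…,v_d)`. Thus `v₀ = ∑ qᵢ vᵢ` has integral coordinates `qᵢ ∈ [0,1)`,
so `v₀ = 0 ∈ ℤ≥0(E)`.
-/

open Matrix

theorem Matrix.exists_int_vecMul_eq_of_det_updateRow {K ι : Type*} [Field K] [Fintype ι]
    [DecidableEq ι] (A : Matrix ι ι K) (hA : A.det ≠ 0) (y : ι → K)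
    (hdiv : ∀ i, ∃ z : ℤ, (A.updateRow i y).det = z * A.det) :
    ∃ c : ι → ℤ, (fun i => (c i : K)) ᵥ* A = y := by
  choose c hc using hdiv
  refine ⟨c, ?_⟩
  have hcramer : (fun i => (c i : K)) = A.det⁻¹ • Aᵀ.cramer y := by
    ext i
    rw [Pi.smul_apply, cramer_transpose_apply, hc, smul_eq_mul, mul_comm,
      mul_inv_cancel_right₀ hA]
  rw [hcramer, ← mulVec_transpose, mulVec_smul, mulVec_cramer, det_transpose, smul_smul,
    inv_mul_cancel₀ hA, one_smul]

theorem LinearIndependent.eq_zero_of_sum_mem_span_int {K V ι : Type*} [Field K]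
    [LinearOrder K] [IsStrictOrderedRing K] [AddCommGroup V] [Module K V] [Fintype ι]
    {v : ι → V} (hli : LinearIndependent K v) {q : ι → K} (hq : ∀ i, 0 ≤ q i ∧ q i < 1)
    (hmem : ∑ i, q i • v i ∈ Submodule.span ℤ (Set.range v)) : q = 0 := by
  obtain ⟨c, hc⟩ := (Submodule.mem_span_range_iff_exists_fun ℤ).mp hmem
  have hcq : ∀ i, (c i : K) = q i := by
    refine Fintype.linearIndependent_iffₛ.mp hli _ _ ?_
    simpa only [Int.cast_smul_eq_zsmul] using hc
  ext i
  have h0 : 0 ≤ c i := by exact_mod_cast (hcq i).symm ▸ (hq i).1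
  have h1 : c i < 1 := by exact_mod_cast (hcq i).symm ▸ (hq i).2
  rw [← hcq i, show c i = 0 by omega, Int.cast_zero, Pi.zero_apply]

theorem memZSpan.mem_span_int {n : ℕ} {E : Finset (Fin n → ℚ)} {v : Fin n → ℚ}
    (h : memZSpan E v) : v ∈ Submodule.span ℤ (E : Set (Fin n → ℚ)) := by
  obtain ⟨c, rfl⟩ := h
  simp only [Int.cast_smul_eq_zsmul]
  exact Submodule.sum_mem _ fun w hw => Submodule.smul_mem _ _ (Submodule.subset_span hw)

section detT

variable {n d : ℕ} (M : Finset (Fin n → ℚ))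
  (b : Module.Basis (Fin d) ℚ (Submodule.span ℚ (M : Set (Fin n → ℚ))))

def toSpan (w : M) : Submodule.span ℚ (M : Set (Fin n → ℚ)) :=
  ⟨w, Submodule.subset_span (Finset.mem_coe.mpr w.2)⟩

noncomputable def reprMatrix (w : Fin d → M) : Matrix (Fin d) (Fin d) ℚ :=
  Matrix.of fun i => b.equivFun (toSpan M (w i))

theorem detT_eq_det_reprMatrix (w : Fin d → M) : detT M b w = (reprMatrix M b w).det := rfl

theorem reprMatrix_update (w : Fin d → M) (i : Fin d) (x : M) :
    reprMatrix M b (Function.update w i x) =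
      (reprMatrix M b w).updateRow i (b.equivFun (toSpan M x)) := by
  ext k j
  by_cases hk : k = i
  · subst hk; simp [reprMatrix]
  · simp [reprMatrix, hk]

theorem detT_ne_zero_of_linearIndependent {v : Fin d → M}
    (hli : LinearIndependent ℚ (fun i => (v i : Fin n → ℚ))) : detT M b v ≠ 0 := by
  have hrows : LinearIndependent ℚ (reprMatrix M b v) := by
    refine LinearIndependent.map' ?_ b.equivFun.toLinearMap b.equivFun.ker
    exact LinearIndependent.of_comp (Submodule.span ℚ (M : Set (Fin n → ℚ))).subtype hli
  rw [detT_eq_det_reprMatrix]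
  exact ((isUnit_iff_isUnit_det _).mp (linearIndependent_rows_iff_isUnit.mp hrows)).ne_zero

theorem subset_span_int_of_detT_dvd {v : Fin d → M}
    (hli : LinearIndependent ℚ (fun i => (v i : Fin n → ℚ)))
    (hdiv : ∀ w : Fin d → M, ∃ z : ℤ, detT M b w = z * detT M b v) :
    (M : Set (Fin n → ℚ)) ⊆ Submodule.span ℤ (Set.range fun i => (v i : Fin n → ℚ)) := by
  intro x hx
  obtain ⟨c, hc⟩ := (reprMatrix M b v).exists_int_vecMul_eq_of_det_updateRow
    (detT_ne_zero_of_linearIndependent M b hli) (b.equivFun (toSpan M ⟨x, hx⟩)) fun i => by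
      simpa only [← reprMatrix_update, ← detT_eq_det_reprMatrix] using hdiv _
  have hx : toSpan M ⟨x, hx⟩ = ∑ i, (c i : ℚ) • toSpan M (v i) := by
    apply b.equivFun.injective
    rw [← hc, vecMul_eq_sum, map_sum]
    simp only [map_smul]
    rfl
  refine (Submodule.mem_span_range_iff_exists_fun ℤ).mpr ⟨c, ?_⟩
  simpa [toSpan, Int.cast_smul_eq_zsmul] using (congrArg Subtype.val hx).symm

end detT

theorem stmt7_general {n d : ℕ} (M : Finset (Fin n → ℚ))
    (b : Module.Basis (Fin d) ℚ (Submodule.span ℚ (M : Set (Fin n → ℚ))))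
    (m : ℚ)
    (hint : ∀ w : Fin d → M, ∃ z : ℤ, detT M b w = (z : ℚ) * m)
    (E : Finset (Fin n → ℚ)) (hE : E ⊆ M)
    (v0 : Fin n → ℚ)
    (hz : memZSpan E v0) (hnn : ¬ memNSpan E v0)
    (v : Fin d → M)
    (hli : LinearIndependent ℚ (fun i : Fin d => (v i : Fin n → ℚ)))
    (q : Fin d → ℚ) (hq01 : ∀ i, 0 ≤ q i ∧ q i < 1)
    (hcomb : v0 = ∑ i, q i • (v i : Fin n → ℚ)) :
    detT M b v ≠ m ∧ detT M b v ≠ -m := by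
  have key : ¬ ∀ w : Fin d → M, ∃ z : ℤ, detT M b w = z * detT M b v := fun hdiv => by
    have hspan := Submodule.span_le.mpr ((Finset.coe_subset.mpr hE).trans
      (subset_span_int_of_detT_dvd M b hli hdiv))
    have hq : q = 0 := hli.eq_zero_of_sum_mem_span_int hq01 (hcomb ▸ hspan hz.mem_span_int)
    exact hnn ⟨0, by simp [hcomb, hq]⟩
  refine ⟨fun hv => key fun w => ?_, fun hv => key fun w => ?_⟩ <;> obtain ⟨z, hzw⟩ := hint w
  · exact ⟨z, by rw [hzw, hv]⟩
  · exact ⟨-z, by rw [hzw, hv]; push_cast; ring⟩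

/-- Let `M ⊆ ℚ^n` be an almost unimodular set of rank `d` and volume `m`. Suppose
`{v0; v1,…,vr}` is an ENSS in `M` (here `E ⊆ M` is the nonsaturated set `{v1,…,vr}` and
`v0 ∈ (ℤ(E) ∩ ℚ≥0(E)) \ ℤ≥0(E)`) whose `ℚ≥0`-combination with coefficients in `[0,1)`
involves only `d` linearly independent vectors `v1,…,vd` of `E` (so they span a
`d`-dimensional space). Then `|det(v1,…,vd)| ≠ m`. -/
theorem stmt7 {n d : ℕ} (M : Finset (Fin n → ℚ))
    (b : Module.Basis (Fin d) ℚ (Submodule.span ℚ (M : Set (Fin n → ℚ))))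
    (m : ℚ)
    (hint : ∀ w : Fin d → M, ∃ z : ℤ, detT M b w = (z : ℚ) * m)
    (hvol : ∃ w : Fin d → M, detT M b w = m)
    (E : Finset (Fin n → ℚ)) (hE : E ⊆ M)
    (hEns : ¬ Saturated E)
    (v0 : Fin n → ℚ)
    (hz : memZSpan E v0) (hqn : memQnnSpan E v0) (hnn : ¬ memNSpan E v0)
    (v : Fin d → M) (hvE : ∀ i, (v i : Fin n → ℚ) ∈ E)
    (hli : LinearIndependent ℚ (fun i : Fin d => (v i : Fin n → ℚ)))
    (q : Fin d → ℚ) (hq01 : ∀ i, 0 ≤ q i ∧ q i < 1)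
    (hcomb : v0 = ∑ i, q i • (v i : Fin n → ℚ)) :
    detT M b v ≠ m ∧ detT M b v ≠ -m :=
  stmt7_general M b m hint E hE v0 hz hnn v hli q hq01 hcomb
end

section
/- Let M ⊆ ℚ^n be an almost unimodular set of rank d such that every nonzero determinant of a d-tuple of vectors from M equals ±m or ±2m, and suppose M is not hereditarily normal. Let {v0; v1,…,vr} be an ENSS in M with corresponding ℚ≥0-combination v0 = q1·v1 + … + ql·vl over linearly independent vectors v1,…,vl with all q_i ∈ [0,1). Then every coefficient q_i belongs to {0, 1/2}. -/
/-! Extend `v₁, …, v_l` to `d` linearly independent vectors `w₁, …, w_d` of `M`; their determinant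
`D` is nonzero, hence `±m` or `±2m`. Replace the row `vᵢ` by `v₀`. By multilinearity the new
determinant is `qᵢ • D`, since every other `vⱼ` is already a row; but `v₀` is also an integer
combination of vectors of `M`, so it is an integer combination of determinants of `d`-tuples from
`M`, which lies in `mℤ`. Hence `2 qᵢ ∈ ℤ`, and `0 ≤ qᵢ < 1` leaves `qᵢ ∈ {0, 1/2}`. -/

open Module Submodule Function

theorem AlternatingMap.map_update_sum_smul_of_injective {R M N ι κ : Type*} [CommSemiring R]
    [AddCommMonoid M] [Module R M] [AddCommMonoid N] [Module R N] [DecidableEq ι] [Fintype κ]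
    (D : M [⋀^ι]→ₗ[R] N) (w : ι → M) (i : ι) {y : κ → M} (hy : Injective y)
    (hyw : ∀ j, y j ∈ Set.range w) {j₀ : κ} (hj₀ : y j₀ = w i) (q : κ → R) :
    D (update w i (∑ j, q j • y j)) = q j₀ • D w := by
  rw [D.map_update_sum, Finset.sum_eq_single j₀]
  · rw [D.map_update_smul, hj₀, update_eq_self]
  · intro j _ hj
    obtain ⟨k, hk⟩ := hyw j
    have hki : k ≠ i := by
      rintro rfl
      exact hj (hy (hk.symm.trans hj₀.symm))
    rw [D.map_update_smul, D.map_eq_zero_of_eq _ (i := i) (j := k) (by simp [hki, hk]) hki.symm,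
      smul_zero]
  · simp

theorem exists_linearIndependent_tuple_extending {K V : Type*} [Field K] [AddCommGroup V]
    [Module K V] (M : Finset V) {d : ℕ} (hd : finrank K (span K (M : Set V)) = d) {l : ℕ}
    {v : Fin l → V} (hvM : ∀ j, v j ∈ M) (hv : LinearIndependent K v) :
    ∃ w : Fin d → M, LinearIndependent K (fun k ↦ (w k : V)) ∧ ∀ j, ∃ k, (w k : V) = v j := by
  obtain ⟨B, hBM, hvB, hMB, hB⟩ := exists_linearIndepOn_id_extension
    ((linearIndepOn_id_range_iff hv.injective).mpr hv) (Set.range_subset_iff.mpr hvM)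
  have : Fintype B := (M.finite_toSet.subset hBM).fintype
  have hspan : span K B = span K (M : Set V) :=
    le_antisymm (span_mono hBM) (span_le.mpr hMB)
  have hcard : Fintype.card B = d := by
    rw [← hd, ← hspan, finrank_span_set_eq_card hB, Set.toFinset_card]
  let e := (Fintype.equivFinOfCardEq hcard).symm
  refine ⟨fun k ↦ ⟨e k, hBM (e k).2⟩, hB.comp e e.injective, fun j ↦ ?_⟩
  exact ⟨e.symm ⟨v j, hvB ⟨j, rfl⟩⟩, by simp⟩

theorem detT_eq_basis_det {n d : ℕ} (M : Finset (Fin n → ℚ))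
    (b : Basis (Fin d) ℚ (span ℚ (M : Set (Fin n → ℚ)))) (w : Fin d → M) :
    detT M b w = b.det (fun k ↦ ⟨w k, subset_span (w k).2⟩) := by
  rw [Basis.det_apply, ← Matrix.det_transpose]
  rfl

theorem detT_ne_zero_of_linearIndependent_s8 {n d : ℕ} (M : Finset (Fin n → ℚ))
    (b : Basis (Fin d) ℚ (span ℚ (M : Set (Fin n → ℚ)))) {w : Fin d → M}
    (hw : LinearIndependent ℚ (fun k ↦ (w k : Fin n → ℚ))) : detT M b w ≠ 0 := by
  have : FiniteDimensional ℚ (span ℚ (M : Set (Fin n → ℚ))) := .of_basis b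
  have hli : LinearIndependent ℚ
      (fun k ↦ (⟨w k, subset_span (w k).2⟩ : span ℚ (M : Set (Fin n → ℚ)))) :=
    .of_comp (span ℚ _).subtype hw
  rw [detT_eq_basis_det]
  exact ((b.is_basis_iff_det).mp ⟨hli, hli.span_eq_top_of_card_eq_finrank'
    (by simp [finrank_eq_card_basis b])⟩).ne_zero

theorem exists_alternatingMap_eq_detT {n d : ℕ} (M : Finset (Fin n → ℚ))
    (b : Basis (Fin d) ℚ (span ℚ (M : Set (Fin n → ℚ)))) :
    ∃ D : (Fin n → ℚ) [⋀^Fin d]→ₗ[ℚ] ℚ, ∀ w : Fin d → M,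
      D (fun k ↦ (w k : Fin n → ℚ)) = detT M b w := by
  obtain ⟨P, hP⟩ := (span ℚ (M : Set (Fin n → ℚ))).subtype.exists_leftInverse_of_injective
    (ker_subtype _)
  refine ⟨b.det.compLinearMap P, fun w ↦ ?_⟩
  rw [AlternatingMap.compLinearMap_apply, detT_eq_basis_det]
  congr 1
  funext k
  exact LinearMap.congr_fun hP ⟨w k, subset_span (w k).2⟩

theorem LinearMap.mem_zmultiples_of_memZSpan {n : ℕ} (f : (Fin n → ℚ) →ₗ[ℚ] ℚ) {m : ℚ}
    {E : Finset (Fin n → ℚ)} (hE : ∀ u ∈ E, f u ∈ AddSubgroup.zmultiples m) {v : Fin n → ℚ}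
    (hv : memZSpan E v) : f v ∈ AddSubgroup.zmultiples m := by
  obtain ⟨c, rfl⟩ := hv
  rw [map_sum]
  refine AddSubgroup.sum_mem _ fun u hu ↦ ?_
  rw [map_smul, Int.cast_smul_eq_zsmul]
  exact AddSubgroup.zsmul_mem _ (hE u hu) _

theorem mem_zmultiples_of_eq_zero_or_pm_or_pm_two_mul {x m : ℚ}
    (hx : x = 0 ∨ x = m ∨ x = -m ∨ x = 2 * m ∨ x = -(2 * m)) :
    x ∈ AddSubgroup.zmultiples m := by
  rw [AddSubgroup.mem_zmultiples_iff]
  rcases hx with rfl | rfl | rfl | rfl | rfl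
  exacts [⟨0, zero_smul _ _⟩, ⟨1, one_smul _ _⟩, ⟨-1, neg_one_zsmul _⟩,
    ⟨2, by rw [two_zsmul, two_mul]⟩, ⟨-2, by rw [neg_zsmul, two_zsmul, two_mul]⟩]

theorem eq_zero_or_eq_half_of_two_mul_eq_int {q : ℚ} (hq : 0 ≤ q ∧ q < 1) {k : ℤ}
    (hk : 2 * q = k) : q = 0 ∨ q = 1 / 2 := by
  have hk0 : 0 ≤ k := by exact_mod_cast hk ▸ (by linarith : (0 : ℚ) ≤ 2 * q)
  have hk2 : k < 2 := by exact_mod_cast hk ▸ (by linarith : 2 * q < 2)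
  interval_cases k
  · left; push_cast at hk; linarith
  · right; push_cast at hk; linarith

theorem exists_two_mul_eq_int_of_mul_mem_zmultiples {q D m : ℚ}
    (hD : D = 0 ∨ D = m ∨ D = -m ∨ D = 2 * m ∨ D = -(2 * m)) (hD0 : D ≠ 0)
    (h : q * D ∈ AddSubgroup.zmultiples m) : ∃ k : ℤ, 2 * q = k := by
  obtain ⟨K, hK⟩ := AddSubgroup.mem_zmultiples_iff.mp h
  rw [zsmul_eq_mul] at hK
  have hm : m ≠ 0 := by
    rintro rfl
    simp only [mul_zero, neg_zero, or_self] at hD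
    exact hD0 hD
  rcases hD with rfl | rfl | rfl | rfl | rfl
  · exact absurd rfl hD0
  · exact ⟨2 * K, mul_right_cancel₀ hm (by push_cast; linear_combination -2 * hK)⟩
  · exact ⟨-2 * K, mul_right_cancel₀ hm (by push_cast; linear_combination 2 * hK)⟩
  · exact ⟨K, mul_right_cancel₀ hm (by linear_combination -hK)⟩
  · exact ⟨-K, mul_right_cancel₀ hm (by push_cast; linear_combination hK)⟩

theorem stmt8_general {n d : ℕ} (M : Finset (Fin n → ℚ))
    (b : Module.Basis (Fin d) ℚ (Submodule.span ℚ (M : Set (Fin n → ℚ))))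
    (m : ℚ)
    (hval : ∀ w : Fin d → M, detT M b w = 0 ∨ detT M b w = m ∨ detT M b w = -m ∨
      detT M b w = 2 * m ∨ detT M b w = -(2 * m))
    (E : Finset (Fin n → ℚ)) (hE : E ⊆ M)
    (v0 : Fin n → ℚ)
    (hz : memZSpan E v0)
    (l : ℕ) (v : Fin l → (Fin n → ℚ)) (hvE : ∀ i, v i ∈ E)
    (hli : LinearIndependent ℚ v)
    (q : Fin l → ℚ) (hq01 : ∀ i, 0 ≤ q i ∧ q i < 1)
    (hcomb : v0 = ∑ i, q i • v i) :
    ∀ i, q i = 0 ∨ q i = 1 / 2 := by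
  intro j₀
  obtain ⟨w, hw, hvw⟩ := exists_linearIndependent_tuple_extending M
    ((finrank_eq_card_basis b).trans (Fintype.card_fin d)) (fun j ↦ hE (hvE j)) hli
  obtain ⟨i, hi⟩ := hvw j₀
  obtain ⟨D, hD⟩ := exists_alternatingMap_eq_detT M b
  let f := D.toMultilinearMap.toLinearMap (fun k ↦ (w k : Fin n → ℚ)) i
  have hf_mul : f v0 = q j₀ * detT M b w := by
    rw [← hD, hcomb, ← smul_eq_mul]
    exact D.map_update_sum_smul_of_injective _ i hli.injective hvw hi.symm q
  have hf_mem : f v0 ∈ AddSubgroup.zmultiples m := by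
    refine f.mem_zmultiples_of_memZSpan (fun u hu ↦ ?_) hz
    have hfu : f u = detT M b (update w i ⟨u, hE hu⟩) := by
      rw [← hD, ← comp_def, comp_update]
      rfl
    exact hfu ▸ mem_zmultiples_of_eq_zero_or_pm_or_pm_two_mul (hval _)
  obtain ⟨k, hk⟩ := exists_two_mul_eq_int_of_mul_mem_zmultiples (hval w)
    (detT_ne_zero_of_linearIndependent_s8 M b hw) (hf_mul ▸ hf_mem)
  exact eq_zero_or_eq_half_of_two_mul_eq_int (hq01 j₀) hk

/-- Let `M ⊆ ℚ^n` be an almost unimodular set of rank `d` and volume `m` such that every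
nonzero determinant of a `d`-tuple of vectors from `M` equals `±m` or `±2m`, and suppose
`M` is not hereditarily normal. Let `{v0; v1,…,vr}` be an ENSS in `M` (with nonsaturated
set `E ⊆ M`) whose `ℚ≥0`-combination `v0 = q1·v1 + … + ql·vl` runs over linearly
independent vectors `v1,…,vl ∈ E` with all `qi ∈ [0,1)`. Then every `qi ∈ {0, 1/2}`. -/
theorem stmt8 {n d : ℕ} (M : Finset (Fin n → ℚ))
    (b : Module.Basis (Fin d) ℚ (Submodule.span ℚ (M : Set (Fin n → ℚ))))
    (m : ℚ)
    (hvol : ∃ w : Fin d → M, detT M b w = m)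
    (hval : ∀ w : Fin d → M, detT M b w = 0 ∨ detT M b w = m ∨ detT M b w = -m ∨
      detT M b w = 2 * m ∨ detT M b w = -(2 * m))
    (hnhn : ¬ ∀ S ⊆ M, Saturated S)
    (E : Finset (Fin n → ℚ)) (hE : E ⊆ M)
    (hEns : ¬ Saturated E)
    (v0 : Fin n → ℚ)
    (hz : memZSpan E v0) (hqn : memQnnSpan E v0) (hnn : ¬ memNSpan E v0)
    (l : ℕ) (v : Fin l → (Fin n → ℚ)) (hvE : ∀ i, v i ∈ E)
    (hli : LinearIndependent ℚ v)
    (q : Fin l → ℚ) (hq01 : ∀ i, 0 ≤ q i ∧ q i < 1)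
    (hcomb : v0 = ∑ i, q i • v i) :
    ∀ i, q i = 0 ∨ q i = 1 / 2 :=
  stmt8_general M b m hval E hE v0 hz l v hvE hli q hq01 hcomb
end

section
/- Let λ = (ℓ1,…,ℓn) ∈ ℤ^n with ℓ1 ≥ ℓ2 ≥ … ≥ ℓn ≥ 0 and ℓ1 ≥ 2. Then at least one of the vectors (2,0,…,0) and (2,1,0,…,0) belongs to the convex hull of the orbit of λ under the group of all signed permutations of the coordinates and has coordinate sum of the same parity as ℓ1 + … + ℓn. -/
/-!
The convex hull `K` of the signed-permutation orbit of `λ` is convex and stable under changing the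
sign of one coordinate, hence solid: if `x ∈ K` and `|y i| ≤ |x i|` for all `i`, then `y ∈ K`
(shrink one coordinate at a time, averaging with the reflected point). So every vector dominated
coordinatewise by a permutation of `λ` lies in `K`. If `∑ ℓᵢ` is even, `(2,0,…,0)` is dominated by
`λ`. If it is odd and some `ℓᵢ` with `i ≠ 1` is nonzero, moving it to the second slot gives a
permutation of `λ` dominating `(2,1,0,…,0)`. Otherwise `λ = (ℓ₁,0,…,0)` with `ℓ₁` odd, so `ℓ₁ ≥ 3`,
and `(2,1,0,…,0) = ⅔ (3,0,…,0) + ⅓ (0,3,0,…,0)`.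
-/

open Function LatticeOrderedAddCommGroup

section Solid

variable {𝕜 ι : Type*} [DecidableEq ι]

theorem convex_setOf_update_mem [Semiring 𝕜] [PartialOrder 𝕜] {C : Set (ι → 𝕜)}
    (hC : Convex 𝕜 C) (x : ι → 𝕜) (j : ι) : Convex 𝕜 {s | update x j s ∈ C} := by
  intro s₁ h₁ s₂ h₂ a b ha hb hab
  have hcomb : update x j (a • s₁ + b • s₂) = a • update x j s₁ + b • update x j s₂ := by
    ext i
    rcases eq_or_ne i j with rfl | hi
    · simp
    · simp [hi, ← add_mul, hab]
  simpa only [Set.mem_ofPred_eq, hcomb] using hC h₁ h₂ ha hb hab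

theorem update_neg_mem_convexHull [Ring 𝕜] [PartialOrder 𝕜] {s : Set (ι → 𝕜)}
    (hs : ∀ x ∈ s, ∀ j, update x j (-x j) ∈ s) {x : ι → 𝕜} (hx : x ∈ convexHull 𝕜 s) (j : ι) :
    update x j (-x j) ∈ convexHull 𝕜 s := by
  have hlin : IsLinearMap 𝕜 (fun x : ι → 𝕜 => update x j (-x j)) := by
    constructor <;> intros <;> ext i <;> rcases eq_or_ne i j with rfl | hi <;> simp [*, add_comm]
  have hmem := hlin.image_convexHull s ▸ Set.mem_image_of_mem _ hx
  exact convexHull_mono (Set.image_subset_iff.2 fun y hy => hs y hy j) hmem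

variable [Field 𝕜] [LinearOrder 𝕜] [IsStrictOrderedRing 𝕜]

theorem Convex.update_mem_of_abs_le {C : Set (ι → 𝕜)} (hC : Convex 𝕜 C)
    (hflip : ∀ x ∈ C, ∀ j, update x j (-x j) ∈ C) {x : ι → 𝕜} (hx : x ∈ C) (j : ι) {t : 𝕜}
    (ht : |t| ≤ |x j|) : update x j t ∈ C := by
  -- the admissible values of the `j`-th coordinate form an interval containing `± x j`
  have hseg := (convex_setOf_update_mem hC x j).segment_subset
    (by simpa using hx : x j ∈ {s | update x j s ∈ C}) (hflip x hx j)
  rw [segment_eq_uIcc] at hseg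
  apply hseg
  obtain ⟨h₁, h₂⟩ := abs_le.mp ht
  rw [Set.mem_uIcc]
  rcases le_total 0 (x j) with h | h
  · rw [abs_of_nonneg h] at h₁ h₂
    exact Or.inr ⟨h₁, h₂⟩
  · rw [abs_of_nonpos h] at h₁ h₂
    exact Or.inl ⟨by linarith, h₂⟩

theorem Convex.isSolid_of_update_neg_mem [Fintype ι] {C : Set (ι → 𝕜)} (hC : Convex 𝕜 C)
    (hflip : ∀ x ∈ C, ∀ j, update x j (-x j) ∈ C) : IsSolid C := by
  intro x hx y hyx
  have hmixed : ∀ T : Finset ι, (fun i => if i ∈ T then y i else x i) ∈ C := by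
    intro T
    induction T using Finset.induction_on with
    | empty => simpa using hx
    | insert j T hj ih =>
      convert hC.update_mem_of_abs_le hflip ih j (t := y j) (by simpa [hj] using hyx j) using 1
      ext i
      rcases eq_or_ne i j with rfl | hi <;> simp [*]
  simpa using hmixed Finset.univ

end Solid

def signedPermOrbit {ι : Type*} (l : ι → ℤ) : Set (ι → ℚ) :=
  {x | ∃ σ : Equiv.Perm ι, ∃ ε : ι → ℚ,
    (∀ i, ε i = 1 ∨ ε i = -1) ∧ x = fun i => ε i * (l (σ i) : ℚ)}

section SignedPermOrbit

variable {ι : Type*} [DecidableEq ι] (l : ι → ℤ)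

theorem update_neg_mem_signedPermOrbit {x : ι → ℚ} (hx : x ∈ signedPermOrbit l) (j : ι) :
    update x j (-x j) ∈ signedPermOrbit l := by
  obtain ⟨σ, ε, hε, rfl⟩ := hx
  refine ⟨σ, update ε j (-ε j), fun i => ?_, ?_⟩
  · rcases eq_or_ne i j with rfl | hi
    · rcases hε i with h | h <;> simp [h]
    · simpa [hi] using hε i
  · ext i
    rcases eq_or_ne i j with rfl | hi <;> simp [*]

theorem mem_convexHull_signedPermOrbit_of_abs_le [Fintype ι] (σ : Equiv.Perm ι) {y : ι → ℚ}
    (hy : ∀ i, |y i| ≤ |(l (σ i) : ℚ)|) : y ∈ convexHull ℚ (signedPermOrbit l) := by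
  have hsolid := (convex_convexHull ℚ _).isSolid_of_update_neg_mem
    fun x hx j => update_neg_mem_convexHull
      (fun x hx j => update_neg_mem_signedPermOrbit l hx j) hx j
  exact hsolid (subset_convexHull ℚ _ (⟨σ, 1, fun _ => Or.inl rfl, by simp⟩ :
    (fun i => (l (σ i) : ℚ)) ∈ signedPermOrbit l)) fun i => by simpa using hy i

theorem single_mem_convexHull_signedPermOrbit [Fintype ι] (σ : Equiv.Perm ι) (a : ι) {s : ℚ}
    (hs : |s| ≤ |(l (σ a) : ℚ)|) : Pi.single a s ∈ convexHull ℚ (signedPermOrbit l) := by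
  refine mem_convexHull_signedPermOrbit_of_abs_le l σ fun k => ?_
  rcases eq_or_ne k a with rfl | hk
  · simpa using hs
  · simp [hk]

theorem single_add_single_mem_convexHull_signedPermOrbit [Fintype ι] (σ : Equiv.Perm ι)
    {a b : ι} (hab : a ≠ b) {s t : ℚ} (hs : |s| ≤ |(l (σ a) : ℚ)|) (ht : |t| ≤ |(l (σ b) : ℚ)|) :
    Pi.single a s + Pi.single b t ∈ convexHull ℚ (signedPermOrbit l) := by
  refine mem_convexHull_signedPermOrbit_of_abs_le l σ fun k => ?_
  rcases eq_or_ne k a with rfl | hka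
  · simpa [hab] using hs
  rcases eq_or_ne k b with rfl | hkb
  · simpa [hka] using ht
  · simp [hka, hkb]

theorem single_add_single_mem_convexHull_signedPermOrbit_of_three_le [Fintype ι] {a b c : ι}
    (hc : 3 ≤ |(l c : ℚ)|) :
    Pi.single a 2 + Pi.single b 1 ∈ convexHull ℚ (signedPermOrbit l) := by
  have hthree : ∀ d, Pi.single d 3 ∈ convexHull ℚ (signedPermOrbit l) := fun d =>
    single_mem_convexHull_signedPermOrbit l (Equiv.swap d c) d (by simpa using hc)
  have hcomb : Pi.single a (2 : ℚ) + Pi.single b 1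
      = (2 / 3 : ℚ) • Pi.single a 3 + (1 / 3 : ℚ) • Pi.single b 3 := by
    rw [← Pi.single_smul, ← Pi.single_smul]
    norm_num
  rw [hcomb]
  exact convex_convexHull ℚ _ (hthree a) (hthree b) (by norm_num) (by norm_num) (by norm_num)

end SignedPermOrbit

theorem Fin.ite_val_eq_zero_eq_single {M : Type*} [Zero M] {n : ℕ} (hn : 0 < n) (a : M) :
    (fun i : Fin n => if (i : ℕ) = 0 then a else 0) = Pi.single ⟨0, hn⟩ a := by
  ext k
  by_cases hk : (k : ℕ) = 0 <;> simp [Pi.single_apply, Fin.ext_iff, hk]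

theorem Fin.ite_val_eq_zero_one_eq_single_add_single {M : Type*} [AddZeroClass M] {n : ℕ}
    (hn : 1 < n) (a b : M) :
    (fun i : Fin n => if (i : ℕ) = 0 then a else if (i : ℕ) = 1 then b else 0)
      = Pi.single ⟨0, by omega⟩ a + Pi.single ⟨1, hn⟩ b := by
  ext k
  by_cases hk₀ : (k : ℕ) = 0
  · simp [Pi.single_apply, Fin.ext_iff, hk₀]
  by_cases hk₁ : (k : ℕ) = 1 <;> simp [Pi.single_apply, Fin.ext_iff, hk₀, hk₁]

/-- Let `λ = (ℓ1,…,ℓn) ∈ ℤ^n` with `ℓ1 ≥ ℓ2 ≥ … ≥ ℓn ≥ 0` and `ℓ1 ≥ 2`. Then at least one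
of the vectors `(2,0,…,0)` and `(2,1,0,…,0)` belongs to the convex hull of the orbit of `λ`
under the group of all signed permutations of the coordinates and has coordinate sum of the
same parity as `ℓ1 + … + ℓn` (i.e. their difference is twice an integer). -/
theorem stmt11 {n : ℕ} (hn : 2 ≤ n) (l : Fin n → ℤ)
    (hl1 : 2 ≤ l ⟨0, by omega⟩) :
    ∃ w : Fin n → ℚ,
      (w = (fun i : Fin n => if (i : ℕ) = 0 then (2 : ℚ) else 0) ∨
       w = (fun i : Fin n => if (i : ℕ) = 0 then (2 : ℚ)
            else if (i : ℕ) = 1 then 1 else 0)) ∧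
      w ∈ convexHull ℚ {x : Fin n → ℚ | ∃ σ : Equiv.Perm (Fin n), ∃ ε : Fin n → ℚ,
        (∀ i, ε i = 1 ∨ ε i = -1) ∧ x = fun i => ε i * (l (σ i) : ℚ)} ∧
      ∃ k : ℤ, (∑ i, w i) - (∑ i, (l i : ℚ)) = 2 * (k : ℚ) := by
  set i₀ : Fin n := ⟨0, by omega⟩
  set i₁ : Fin n := ⟨1, by omega⟩
  have hi₀₁ : i₀ ≠ i₁ := by simp [i₀, i₁]
  have hl₀ : (2 : ℚ) ≤ |(l i₀ : ℚ)| := le_abs.mpr (Or.inl (by exact_mod_cast hl1))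
  rcases Int.even_or_odd (∑ i, l i) with ⟨r, hr⟩ | ⟨r, hr⟩
  · refine ⟨Pi.single i₀ 2, Or.inl (Fin.ite_val_eq_zero_eq_single _ _).symm,
      single_mem_convexHull_signedPermOrbit l (Equiv.refl _) i₀ (by simpa using hl₀), 1 - r, ?_⟩
    rw [Finset.sum_pi_single', if_pos (Finset.mem_univ _), ← Int.cast_sum, hr]
    push_cast
    ring
  · refine ⟨Pi.single i₀ 2 + Pi.single i₁ 1,
      Or.inr (Fin.ite_val_eq_zero_one_eq_single_add_single _ _ _).symm, ?_, 1 - r, ?_⟩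
    · by_cases htail : ∃ i ≠ i₀, l i ≠ 0
      · obtain ⟨i, hi₀, hi⟩ := htail
        refine single_add_single_mem_convexHull_signedPermOrbit l (Equiv.swap i₁ i) hi₀₁ ?_ ?_
        · rwa [Equiv.swap_apply_of_ne_of_ne hi₀₁ hi₀.symm, abs_two]
        · rw [Equiv.swap_apply_left, abs_one]
          exact_mod_cast Int.one_le_abs hi
      · push Not at htail
        have hsum : ∑ i, l i = l i₀ := Finset.sum_eq_single i₀ (fun i _ hi => htail i hi) (by simp)
        refine single_add_single_mem_convexHull_signedPermOrbit_of_three_le l (c := i₀) ?_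
        exact le_abs.mpr (Or.inl (by exact_mod_cast (by omega : 3 ≤ l i₀)))
    · simp only [Pi.add_apply, Finset.sum_add_distrib, Finset.sum_pi_single', Finset.mem_univ,
        if_true, ← Int.cast_sum, hr]
      push_cast
      ring
end

section
/- The set {(1,1,1,1), (1,1,−1,−1), (1,0,1,0), (0,−1,1,0)} ⊆ ℚ^4 is not saturated: the vector (1,1,0,0) belongs to the intersection of the ℤ-span and the ℚ≥0-span of these four vectors, but is not a ℤ≥0-linear combination of them. -/
section Spans

variable {n : ℕ} {M : Finset (Fin n → ℚ)} {u v w : Fin n → ℚ}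

theorem memZSpan_of_mem (hu : u ∈ M) : memZSpan M u :=
  ⟨fun w => if w = u then 1 else 0, by simp [hu]⟩

theorem memZSpan.sub (hv : memZSpan M v) (hw : memZSpan M w) : memZSpan M (v - w) := by
  obtain ⟨c, rfl⟩ := hv
  obtain ⟨d, rfl⟩ := hw
  exact ⟨c - d, by simp [sub_smul]⟩

theorem memQnnSpan_of_mem (hu : u ∈ M) : memQnnSpan M u :=
  ⟨fun w => if w = u then 1 else 0, fun _ => ite_nonneg zero_le_one le_rfl, by simp [hu]⟩

theorem memQnnSpan.add (hv : memQnnSpan M v) (hw : memQnnSpan M w) : memQnnSpan M (v + w) := by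
  obtain ⟨q, hq, rfl⟩ := hv
  obtain ⟨r, hr, rfl⟩ := hw
  exact ⟨q + r, fun w => add_nonneg (hq w) (hr w), by simp [add_smul, Finset.sum_add_distrib]⟩

theorem memQnnSpan.smul (hv : memQnnSpan M v) {t : ℚ} (ht : 0 ≤ t) : memQnnSpan M (t • v) := by
  obtain ⟨q, hq, rfl⟩ := hv
  exact ⟨t • q, fun w => mul_nonneg ht (hq w), by simp [Finset.smul_sum, mul_smul]⟩

theorem not_saturated_of_not_memNSpan (hZ : memZSpan M v) (hQ : memQnnSpan M v)
    (hN : ¬ memNSpan M v) : ¬ Saturated M :=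
  fun hM => hN (hM v hZ hQ)

end Spans

theorem not_memNSpan_one_one_zero_zero :
    ¬ memNSpan ({![1, 1, 1, 1], ![1, 1, -1, -1], ![1, 0, 1, 0], ![0, -1, 1, 0]} :
      Finset (Fin 4 → ℚ)) ![1, 1, 0, 0] := by
  rintro ⟨a, ha⟩
  rw [Finset.sum_insert (by norm_num), Finset.sum_insert (by norm_num),
    Finset.sum_pair (by norm_num)] at ha
  have h0 := congrFun ha 0
  have h1 := congrFun ha 1
  have h3 := congrFun ha 3
  simp only [Matrix.cons_val, Pi.add_apply, Pi.smul_apply, smul_eq_mul, mul_one, mul_zero,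
    mul_neg] at h0 h1 h3
  generalize a ![1, 1, 1, 1] = a₁, a ![1, 1, -1, -1] = a₂, a ![1, 0, 1, 0] = a₃,
    a ![0, -1, 1, 0] = a₄ at h0 h1 h3
  have hcoord0 : a₁ + a₂ + a₃ = 1 := by exact_mod_cast (by linarith : (a₁ + a₂ + a₃ : ℚ) = 1)
  have hcoord1 : a₁ + a₂ = 1 + a₄ := by exact_mod_cast (by linarith : (a₁ + a₂ : ℚ) = 1 + a₄)
  have hcoord3 : a₁ = a₂ := by exact_mod_cast (by linarith : (a₁ : ℚ) = a₂)
  omega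

/-- The set `{(1,1,1,1), (1,1,−1,−1), (1,0,1,0), (0,−1,1,0)} ⊆ ℚ^4` is not saturated:
the vector `(1,1,0,0)` belongs to the intersection of the `ℤ`-span and the `ℚ≥0`-span of
these four vectors, but is not a `ℤ≥0`-linear combination of them. -/
theorem stmt18 :
    memZSpan ({![1, 1, 1, 1], ![1, 1, -1, -1], ![1, 0, 1, 0], ![0, -1, 1, 0]} :
      Finset (Fin 4 → ℚ)) ![1, 1, 0, 0] ∧
    memQnnSpan ({![1, 1, 1, 1], ![1, 1, -1, -1], ![1, 0, 1, 0], ![0, -1, 1, 0]} :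
      Finset (Fin 4 → ℚ)) ![1, 1, 0, 0] ∧
    ¬ memNSpan ({![1, 1, 1, 1], ![1, 1, -1, -1], ![1, 0, 1, 0], ![0, -1, 1, 0]} :
      Finset (Fin 4 → ℚ)) ![1, 1, 0, 0] ∧
    ¬ Saturated ({![1, 1, 1, 1], ![1, 1, -1, -1], ![1, 0, 1, 0], ![0, -1, 1, 0]} :
      Finset (Fin 4 → ℚ)) := by
  set M : Finset (Fin 4 → ℚ) := {![1, 1, 1, 1], ![1, 1, -1, -1], ![1, 0, 1, 0], ![0, -1, 1, 0]}
  have hZ : memZSpan M ![1, 1, 0, 0] := by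
    have h : (![1, 1, 0, 0] : Fin 4 → ℚ) = ![1, 0, 1, 0] - ![0, -1, 1, 0] := by
      ext i; fin_cases i <;> norm_num
    rw [h]
    exact (memZSpan_of_mem (by simp [M])).sub (memZSpan_of_mem (by simp [M]))
  have hQ : memQnnSpan M ![1, 1, 0, 0] := by
    have h : (![1, 1, 0, 0] : Fin 4 → ℚ) = (1 / 2 : ℚ) • (![1, 1, 1, 1] + ![1, 1, -1, -1]) := by
      ext i; fin_cases i <;> norm_num
    rw [h]
    exact ((memQnnSpan_of_mem (by simp [M])).add (memQnnSpan_of_mem (by simp [M]))).smul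
      (by norm_num)
  have hN : ¬ memNSpan M ![1, 1, 0, 0] := not_memNSpan_one_one_zero_zero
  exact ⟨hZ, hQ, hN, not_saturated_of_not_memNSpan hZ hQ hN⟩
end
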